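/- Let f = Σ_{r=0}^n x_r^{d_1} g_r be a CW-Nagata polynomial of bidegree (d_1,d_2). For every j with 1 ≤ j ≤ d_2, the classes in A_{(0,j)} of the monomials U_1^{s_1}⋯U_m^{s_m} with s_1+⋯+s_m = j such that u_1^{s_1}⋯u_m^{s_m} divides at least one g_r form a K-basis of A_{(0,j)}; in particular dim_K A_{(0,j)} = f_j, the number of monic monomials of degree j in u_1,…,u_m dividing at least one g_r. -/

import Mathlib

/-!
Contracting `f = ∑ x_r^{d₁} u^{g_r}` by `U^s` gives `∑_{s ≤ g_r} x_r^{d₁} u^{g_r - s}`. Because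
`d₁ ≥ 1`, the monomials `x_r^{d₁} u^{g_r - s}` are pairwise distinct as `(r, s)` varies, so the
contractions by the `U^s` dividing some `g_r` are linearly independent, while every other `U^s`
annihilates `f`. Since `T_(0,j)` is spanned by the `U^s` of degree `j`, the classes of those
dividing some `g_r` form a basis of `A_(0,j)`.
-/

open MvPolynomial

namespace CW

variable {σ K : Type*} [CommSemiring K]

/-- A generic "monomial contraction-type" action of the polynomial ring on itself,
determined by a structure coefficient `ν c a` (the coefficient produced when the
operator monomial with exponent `a` acts on the monomial with exponent `c`). -/
noncomputable def genAct (ν : (σ →₀ ℕ) → (σ →₀ ℕ) → K) (α f : MvPolynomial σ K) :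
    MvPolynomial σ K :=
  Finsupp.sum (AddMonoidAlgebra.coeff α) fun a ca => Finsupp.sum (AddMonoidAlgebra.coeff f) fun c cf => monomial (c - a) (ν c a * (ca * cf))

theorem genAct_zero_left (ν : (σ →₀ ℕ) → (σ →₀ ℕ) → K) (f : MvPolynomial σ K) :
    genAct ν 0 f = 0 :=
  Finsupp.sum_zero_index (h := fun a ca => Finsupp.sum (AddMonoidAlgebra.coeff f) fun c cf => monomial (c - a) (ν c a * (ca * cf)))

theorem genAct_zero_right (ν : (σ →₀ ℕ) → (σ →₀ ℕ) → K) (α : MvPolynomial σ K) :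
    genAct ν α 0 = 0 := by
  unfold genAct
  simp only [AddMonoidAlgebra.coeff_zero, Finsupp.sum, Finsupp.support_zero, Finset.sum_empty,
    Finset.sum_const_zero]

theorem genAct_add_left (ν : (σ →₀ ℕ) → (σ →₀ ℕ) → K) (α β f : MvPolynomial σ K) :
    genAct ν (α + β) f = genAct ν α f + genAct ν β f := by
  unfold genAct
  rw [AddMonoidAlgebra.coeff_add]
  apply Finsupp.sum_add_index'
  · intro a
    simp only [mul_zero, zero_mul, map_zero, Finsupp.sum, Finset.sum_const_zero]
  · intro a b₁ b₂
    rw [← Finsupp.sum_add]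
    apply Finsupp.sum_congr
    intro c _
    rw [add_mul, mul_add, map_add]

theorem genAct_add_right (ν : (σ →₀ ℕ) → (σ →₀ ℕ) → K) (α f g : MvPolynomial σ K) :
    genAct ν α (f + g) = genAct ν α f + genAct ν α g := by
  unfold genAct
  rw [AddMonoidAlgebra.coeff_add]
  rw [← Finsupp.sum_add]
  apply Finsupp.sum_congr
  intro a _
  apply Finsupp.sum_add_index'
  · intro c
    simp only [mul_zero, map_zero]
  · intro c c₁ c₂
    rw [mul_add, mul_add, map_add]

theorem genAct_monomial (ν : (σ →₀ ℕ) → (σ →₀ ℕ) → K) (a c : σ →₀ ℕ) (r s : K) :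
    genAct ν (monomial a r) (monomial c s) = monomial (c - a) (ν c a * (r * s)) := by
  unfold genAct
  rw [← single_eq_monomial a r, ← single_eq_monomial c s, AddMonoidAlgebra.coeff_single,
    AddMonoidAlgebra.coeff_single]
  rw [Finsupp.sum_single_index, Finsupp.sum_single_index]
  · simp only [mul_zero, map_zero]
  · simp only [mul_zero, zero_mul, map_zero, Finsupp.sum, Finset.sum_const_zero]

theorem genAct_mul {ν : (σ →₀ ℕ) → (σ →₀ ℕ) → K}
    (hν : ∀ c a b, ν c (a + b) = ν c b * ν (c - b) a) (α β f : MvPolynomial σ K) :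
    genAct ν (α * β) f = genAct ν α (genAct ν β f) := by
  induction α using MvPolynomial.induction_on' with
  | add p q hp hq => rw [add_mul, genAct_add_left, hp, hq, genAct_add_left]
  | monomial a r =>
    induction β using MvPolynomial.induction_on' with
    | add p q hp hq =>
      rw [mul_add, genAct_add_left, hp, hq, ← genAct_add_right, genAct_add_left]
    | monomial b s =>
      induction f using MvPolynomial.induction_on' with
      | add p q hp hq =>
        rw [genAct_add_right, hp, hq, ← genAct_add_right, ← genAct_add_right]
      | monomial c t =>
        rw [monomial_mul, genAct_monomial, genAct_monomial, genAct_monomial,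
          show c - (a + b) = c - b - a from by rw [tsub_tsub, add_comm], hν]
        congr 1
        ring

/-- The annihilator ideal of `f` under the action `genAct ν`. -/
noncomputable def annG (ν : (σ →₀ ℕ) → (σ →₀ ℕ) → K)
    (hν : ∀ c a b, ν c (a + b) = ν c b * ν (c - b) a) (f : MvPolynomial σ K) :
    Ideal (MvPolynomial σ K) where
  carrier := {α | genAct ν α f = 0}
  zero_mem' := genAct_zero_left ν f
  add_mem' := by
    intro a b ha hb
    show genAct ν (a + b) f = 0
    rw [genAct_add_left, ha, hb, add_zero]
  smul_mem' := by
    intro c α hα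
    show genAct ν (c * α) f = 0
    rw [genAct_mul hν, hα, genAct_zero_right]

/-- Structure coefficient of the contraction (apolarity) action: `X^a` sends `x^c`
to `x^(c-a)` if `a ≤ c` and to `0` otherwise. -/
noncomputable def cnu (c a : σ →₀ ℕ) : K :=
  open scoped Classical in if a ≤ c then 1 else 0

theorem cnu_mul (c a b : σ →₀ ℕ) :
    (cnu c (a + b) : K) = cnu c b * cnu (c - b) a := by
  classical
  unfold cnu
  by_cases hb : b ≤ c
  · by_cases ha : a ≤ c - b
    · have h : a + b ≤ c := (le_tsub_iff_right hb).mp ha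
      simp [hb, ha, h]
    · have h : ¬ a + b ≤ c := fun h => ha ((le_tsub_iff_right hb).mpr h)
      simp [hb, ha, h]
  · have h : ¬ a + b ≤ c := fun h => hb (le_trans le_add_self h)
    simp [hb, h]

/-- The contraction action `α ∘ f`. -/
noncomputable def cAct (α f : MvPolynomial σ K) : MvPolynomial σ K :=
  genAct cnu α f

/-- The annihilator `Ann(f)` of `f` under the contraction action, as an ideal. -/
noncomputable def cAnn (f : MvPolynomial σ K) : Ideal (MvPolynomial σ K) :=
  annG cnu cnu_mul f

theorem mem_cAnn {f α : MvPolynomial σ K} : α ∈ cAnn f ↔ cAct α f = 0 := Iff.rfl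

/-- The `K`-submodule of polynomials all of whose monomials satisfy `P`. -/
noncomputable def bihom (K : Type*) [CommSemiring K] {σ : Type*} (P : (σ →₀ ℕ) → Prop) :
    Submodule K (MvPolynomial σ K) where
  carrier := {p | ∀ c ∈ p.support, P c}
  zero_mem' := by
    intro c hc
    simp at hc
  add_mem' := by
    classical
    intro p q hp hq c hc
    rcases Finset.mem_union.mp (MvPolynomial.support_add hc) with h | h
    · exact hp c h
    · exact hq c h
  smul_mem' := by
    intro k p hp c hc
    exact hp c (MvPolynomial.support_smul hc)

/-- The x-degree of an exponent vector. -/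
def degX {n m : ℕ} (c : (Fin (n + 1) ⊕ Fin m) →₀ ℕ) : ℕ := ∑ r, c (Sum.inl r)

/-- The u-degree of an exponent vector. -/
def degU {n m : ℕ} (c : (Fin (n + 1) ⊕ Fin m) →₀ ℕ) : ℕ := ∑ k, c (Sum.inr k)

/-- The bihomogeneous component `T_(i,j)`. -/
noncomputable def Tbi (K : Type*) [CommSemiring K] {n m : ℕ} (i j : ℕ) :
    Submodule K (MvPolynomial (Fin (n + 1) ⊕ Fin m) K) :=
  bihom K fun c => degX c = i ∧ degU c = j

/-- The bigraded component `A_(i,j)` of `A = T ⧸ Ann(f)`: the image of `T_(i,j)`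
in the quotient. -/
noncomputable def Abi {K : Type*} [Field K] {n m : ℕ}
    (f : MvPolynomial (Fin (n + 1) ⊕ Fin m) K) (i j : ℕ) :
    Submodule K (MvPolynomial (Fin (n + 1) ⊕ Fin m) K ⧸ cAnn f) :=
  (Tbi K i j).map (Ideal.Quotient.mkₐ K (cAnn f)).toLinearMap

theorem cAct_sum_left {ι : Type*} (t : Finset ι) (α : ι → MvPolynomial σ K)
    (f : MvPolynomial σ K) : cAct (∑ i ∈ t, α i) f = ∑ i ∈ t, cAct (α i) f := by
  classical
  induction t using Finset.induction with
  | empty => exact genAct_zero_left cnu f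
  | insert _ _ hi ih =>
    rw [Finset.sum_insert hi, Finset.sum_insert hi, ← ih]
    exact genAct_add_left cnu _ _ f

theorem cAct_sum_right {ι : Type*} (α : MvPolynomial σ K) (t : Finset ι)
    (f : ι → MvPolynomial σ K) : cAct α (∑ i ∈ t, f i) = ∑ i ∈ t, cAct α (f i) := by
  classical
  induction t using Finset.induction with
  | empty => exact genAct_zero_right cnu α
  | insert _ _ hi ih =>
    rw [Finset.sum_insert hi, Finset.sum_insert hi, ← ih]
    exact genAct_add_right cnu α _ _

theorem cAct_monomial_monomial (a e : σ →₀ ℕ) (c d : K) :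
    cAct (monomial a c) (monomial e d) = if a ≤ e then monomial (e - a) (c * d) else 0 := by
  rw [cAct, genAct_monomial, cnu]
  split_ifs <;> simp

theorem coeff_cAct_sum_monomial {ι ρ : Type*} (t : Finset ι) (a : ι → σ →₀ ℕ) (c : ι → K)
    (u : Finset ρ) (e : ρ → σ →₀ ℕ) {i₀ : ι} {r₀ : ρ} (hi₀ : i₀ ∈ t) (hr₀ : r₀ ∈ u)
    (hle : a i₀ ≤ e r₀)
    (hsep : ∀ i ∈ t, ∀ r ∈ u, a i ≤ e r → e r - a i = e r₀ - a i₀ → i = i₀ ∧ r = r₀) :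
    coeff (e r₀ - a i₀) (cAct (∑ i ∈ t, monomial (a i) (c i)) (∑ r ∈ u, monomial (e r) 1)) =
      c i₀ := by
  classical
  have hterm : ∀ i ∈ t, ∀ r ∈ u, coeff (e r₀ - a i₀) (cAct (monomial (a i) (c i))
      (monomial (e r) 1)) = if i = i₀ ∧ r = r₀ then c i₀ else 0 := by
    intro i hi r hr
    by_cases hir : i = i₀ ∧ r = r₀
    · obtain ⟨rfl, rfl⟩ := hir
      simp [cAct_monomial_monomial, hle]
    rw [if_neg hir, cAct_monomial_monomial]
    split_ifs with hair
    · rw [coeff_monomial, if_neg fun h => hir (hsep i hi r hr hair h)]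
    · exact coeff_zero _
  simp_rw [cAct_sum_left, cAct_sum_right, coeff_sum]
  rw [Finset.sum_congr rfl fun i hi => Finset.sum_congr rfl (hterm i hi)]
  simp [ite_and, hi₀, hr₀]

section Nagata

variable {ι κ : Type*}

noncomputable def nagataExp (d₁ : ℕ) (g : ι → κ →₀ ℕ) (r : ι) : ι ⊕ κ →₀ ℕ :=
  Finsupp.single (Sum.inl r) d₁ + (g r).mapDomain Sum.inr

noncomputable def cwNagata (K : Type*) [CommSemiring K] [Fintype ι] (d₁ : ℕ)
    (g : ι → κ →₀ ℕ) : MvPolynomial (ι ⊕ κ) K :=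
  ∑ r, X (Sum.inl r) ^ d₁ * monomial ((g r).mapDomain Sum.inr) 1

theorem cwNagata_eq_sum_monomial [Fintype ι] (d₁ : ℕ) (g : ι → κ →₀ ℕ) :
    cwNagata K d₁ g = ∑ r, monomial (nagataExp d₁ g r) 1 := by
  simp only [cwNagata, nagataExp, X_pow_eq_monomial, monomial_mul, one_mul]

theorem mapDomain_inr_apply_inl (s : κ →₀ ℕ) (i : ι) :
    s.mapDomain Sum.inr (Sum.inl i) = 0 :=
  Finsupp.mapDomain_of_notMem_range _ _ (by simp)

theorem mapDomain_inr_apply_inr (s : κ →₀ ℕ) (k : κ) :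
    s.mapDomain (Sum.inr : κ → ι ⊕ κ) (Sum.inr k) = s k :=
  Finsupp.mapDomain_apply Sum.inr_injective _ _

variable {d₁ : ℕ} {g : ι → κ →₀ ℕ}

theorem nagataExp_apply_inl [DecidableEq ι] (r i : ι) :
    nagataExp d₁ g r (Sum.inl i) = if r = i then d₁ else 0 := by
  rw [nagataExp, Finsupp.add_apply, mapDomain_inr_apply_inl, add_zero,
    Finsupp.single_apply_left Sum.inl_injective, Finsupp.single_apply]

theorem nagataExp_apply_inr (r : ι) (k : κ) : nagataExp d₁ g r (Sum.inr k) = g r k := by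
  simp [nagataExp, mapDomain_inr_apply_inr]

theorem mapDomain_inr_le_nagataExp_iff {s : κ →₀ ℕ} {r : ι} :
    s.mapDomain Sum.inr ≤ nagataExp d₁ g r ↔ s ≤ g r := by
  simp only [Finsupp.le_def, Sum.forall, mapDomain_inr_apply_inl, mapDomain_inr_apply_inr,
    nagataExp_apply_inr, zero_le, implies_true, true_and]

theorem nagataExp_sub_mapDomain_inr_injective (hd₁ : d₁ ≠ 0) {s s' : κ →₀ ℕ} {r r' : ι}
    (hs : s ≤ g r) (hs' : s' ≤ g r')
    (h : nagataExp d₁ g r - s.mapDomain Sum.inr = nagataExp d₁ g r' - s'.mapDomain Sum.inr) :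
    s = s' ∧ r = r' := by
  classical
  have hr : r = r' := by
    by_contra hne
    have := DFunLike.congr_fun h (Sum.inl r)
    simp only [Finsupp.tsub_apply, nagataExp_apply_inl, mapDomain_inr_apply_inl,
      if_neg (Ne.symm hne), ↓reduceIte] at this
    omega
  subst hr
  refine ⟨Finsupp.ext fun k => ?_, rfl⟩
  have := DFunLike.congr_fun h (Sum.inr k)
  simp only [Finsupp.tsub_apply, nagataExp_apply_inr, mapDomain_inr_apply_inr] at this
  have := Finsupp.le_def.mp hs k
  have := Finsupp.le_def.mp hs' k
  omega

variable [Fintype ι]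

theorem monomial_mem_cAnn_cwNagata {a : ι ⊕ κ →₀ ℕ} (ha : ∀ r, ¬a ≤ nagataExp d₁ g r) (c : K) :
    monomial a c ∈ cAnn (cwNagata K d₁ g) := by
  rw [mem_cAnn, cwNagata_eq_sum_monomial, cAct_sum_right]
  exact Finset.sum_eq_zero fun r _ => by rw [cAct_monomial_monomial, if_neg (ha r)]

theorem linearIndependent_mk_monomial_cwNagata {K : Type*} [CommRing K] (hd₁ : d₁ ≠ 0) :
    LinearIndependent K fun s : {s : κ →₀ ℕ // ∃ r, s ≤ g r} =>
      Ideal.Quotient.mk (cAnn (cwNagata K d₁ g)) (monomial (s.1.mapDomain Sum.inr) 1) := by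
  classical
  rw [linearIndependent_iff']
  intro t c hsum s₀ hs₀
  obtain ⟨r₀, hr₀⟩ := s₀.2
  have hann : ∑ s ∈ t, monomial (s.1.mapDomain Sum.inr) (c s) ∈ cAnn (cwNagata K d₁ g) := by
    rw [← Ideal.Quotient.eq_zero_iff_mem, ← hsum, map_sum]
    refine Finset.sum_congr rfl fun s _ => ?_
    rw [← Ideal.Quotient.mkₐ_eq_mk K, ← map_smul, smul_monomial, smul_eq_mul, mul_one]
  rw [mem_cAnn, cwNagata_eq_sum_monomial] at hann
  rw [← coeff_cAct_sum_monomial t (fun s => s.1.mapDomain Sum.inr) c Finset.univ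
    (nagataExp d₁ g) hs₀ (Finset.mem_univ r₀) (mapDomain_inr_le_nagataExp_iff.mpr hr₀), hann,
    coeff_zero]
  intro s _ r _ hle heq
  obtain ⟨hs, rfl⟩ := nagataExp_sub_mapDomain_inr_injective hd₁
    (mapDomain_inr_le_nagataExp_iff.mp hle) hr₀ heq
  exact ⟨Subtype.ext hs, rfl⟩

end Nagata

theorem bihom_eq_restrictSupport (P : (σ →₀ ℕ) → Prop) :
    bihom K P = restrictSupport K {c | P c} :=
  rfl

theorem setOf_degX_eq_zero_and_degU_eq (n m j : ℕ) :
    {c : Fin (n + 1) ⊕ Fin m →₀ ℕ | degX c = 0 ∧ degU c = j} =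
      (Finsupp.mapDomain Sum.inr) '' {s | ∑ k, s k = j} := by
  ext c
  constructor
  · rintro ⟨hx, hu⟩
    have hinl : ∀ i, c (Sum.inl i) = 0 := fun i => Finset.sum_eq_zero_iff.mp hx i (by simp)
    refine ⟨c.comapDomain Sum.inr Sum.inr_injective.injOn, hu, ?_⟩
    ext (i | k)
    · rw [mapDomain_inr_apply_inl, hinl]
    · rw [mapDomain_inr_apply_inr, Finsupp.comapDomain_apply]
  · rintro ⟨s, hs, rfl⟩
    exact ⟨by simp [degX, mapDomain_inr_apply_inl], by simpa [degU, mapDomain_inr_apply_inr]⟩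

theorem Tbi_zero_eq_span (n m j : ℕ) :
    Tbi K (n := n) (m := m) 0 j =
      Submodule.span K
        ((fun s : Fin m →₀ ℕ => monomial (s.mapDomain Sum.inr) 1) '' {s | ∑ k, s k = j}) := by
  rw [Tbi, bihom_eq_restrictSupport, restrictSupport_eq_span, setOf_degX_eq_zero_and_degU_eq,
    Set.image_image]

theorem Abi_cwNagata_zero_eq_span {K : Type*} [Field K] {n m d₁ : ℕ}
    (g : Fin (n + 1) → Fin m →₀ ℕ) (j : ℕ) :
    Abi (cwNagata K d₁ g) 0 j = Submodule.span K (Set.range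
      fun s : {s : Fin m →₀ ℕ // ∑ k, s k = j ∧ ∃ r, s ≤ g r} =>
        Ideal.Quotient.mk (cAnn (cwNagata K d₁ g)) (monomial (s.1.mapDomain Sum.inr) 1)) := by
  rw [Abi, Tbi_zero_eq_span, Submodule.map_span, Set.image_image]
  apply le_antisymm
  · rw [Submodule.span_le]
    rintro _ ⟨s, hs, rfl⟩
    by_cases hg : ∃ r, s ≤ g r
    · exact Submodule.subset_span ⟨⟨s, hs, hg⟩, rfl⟩
    · have hann := monomial_mem_cAnn_cwNagata (K := K) (d₁ := d₁)
        (fun r h => hg ⟨r, mapDomain_inr_le_nagataExp_iff.mp h⟩) 1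
      simp [Ideal.Quotient.eq_zero_iff_mem.mpr hann]
  · exact Submodule.span_mono (Set.range_subset_iff.mpr fun s => ⟨s.1, s.2.1, rfl⟩)

theorem stmt_0_general {K : Type*} [Field K] (n m d₁ : ℕ)
    (hd₁ : 1 ≤ d₁)
    -- the exponent vectors of the monic monomials `g_0, …, g_n` in `u_1, …, u_m`
    (g : Fin (n + 1) → (Fin m →₀ ℕ))
    -- the CW-Nagata polynomial `f = ∑ x_r^{d₁} g_r`
    (f : MvPolynomial (Fin (n + 1) ⊕ Fin m) K)
    (hf : f = ∑ r, MvPolynomial.X (Sum.inl r) ^ d₁ *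
      MvPolynomial.monomial ((g r).mapDomain Sum.inr) 1)
    (j : ℕ) :
    (∃ b : Module.Basis {s : Fin m →₀ ℕ // (∑ k, s k) = j ∧ ∃ r, s ≤ g r} K (Abi f 0 j),
      ∀ s, (b s : MvPolynomial (Fin (n + 1) ⊕ Fin m) K ⧸ cAnn f) =
        Ideal.Quotient.mk (cAnn f)
          (MvPolynomial.monomial ((s : Fin m →₀ ℕ).mapDomain Sum.inr) 1)) ∧
    Module.finrank K (Abi f 0 j) =
      (((Finset.univ : Finset (Fin (n + 1))).biUnion fun r => Finset.Iic (g r)).filter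
        fun s => (∑ k, s k) = j).card := by
  obtain rfl : f = cwNagata K d₁ g := hf
  have hv := (linearIndependent_mk_monomial_cwNagata (K := K) (g := g)
      (Nat.one_le_iff_ne_zero.mp hd₁)).comp
    (fun s : {s : Fin m →₀ ℕ // (∑ k, s k) = j ∧ ∃ r, s ≤ g r} => ⟨s.1, s.2.2⟩)
    (Function.Injective.of_comp (f := Subtype.val) Subtype.val_injective)
  let b := (Module.Basis.span hv).map (LinearEquiv.ofEq _ _ (Abi_cwNagata_zero_eq_span g j).symm)
  refine ⟨⟨b, fun s => ?_⟩, ?_⟩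
  · rw [Module.Basis.map_apply, LinearEquiv.coe_ofEq_apply, Module.Basis.span_apply]
    rfl
  · rw [Module.finrank_eq_nat_card_basis b, ← Nat.card_eq_finsetCard]
    exact Nat.card_congr (Equiv.subtypeEquivRight fun s => by simp [and_comm])

theorem stmt_0 {K : Type*} [Field K] [CharZero K] (n m d₁ d₂ : ℕ)
    (hd₁ : 1 ≤ d₁) (hd₂ : 2 ≤ d₂)
    -- the exponent vectors of the monic monomials `g_0, …, g_n` in `u_1, …, u_m`
    (g : Fin (n + 1) → (Fin m →₀ ℕ))
    (hgdeg : ∀ r, (∑ k, g r k) = d₂)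
    (hginj : Function.Injective g)
    -- the CW-Nagata polynomial `f = ∑ x_r^{d₁} g_r`
    (f : MvPolynomial (Fin (n + 1) ⊕ Fin m) K)
    (hf : f = ∑ r, MvPolynomial.X (Sum.inl r) ^ d₁ *
      MvPolynomial.monomial ((g r).mapDomain Sum.inr) 1)
    (j : ℕ) (hj : 1 ≤ j) (hjd : j ≤ d₂) :
    (∃ b : Module.Basis {s : Fin m →₀ ℕ // (∑ k, s k) = j ∧ ∃ r, s ≤ g r} K (Abi f 0 j),
      ∀ s, (b s : MvPolynomial (Fin (n + 1) ⊕ Fin m) K ⧸ cAnn f) =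
        Ideal.Quotient.mk (cAnn f)
          (MvPolynomial.monomial ((s : Fin m →₀ ℕ).mapDomain Sum.inr) 1)) ∧
    Module.finrank K (Abi f 0 j) =
      (((Finset.univ : Finset (Fin (n + 1))).biUnion fun r => Finset.Iic (g r)).filter
        fun s => (∑ k, s k) = j).card :=
  stmt_0_general n m d₁ hd₁ g f hf j

end CW
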